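/- Let 1 < p < 2 and let a, b, c, d be real numbers. Then (J_p(a-b) - J_p(c-d))·((a-c) - (b-d)) ≥ (p-1)·|(a-c) - (b-d)|²·(|a-b|² + |c-d|²)^{(p-2)/2}, where the right-hand side is interpreted as 0 when a = b and c = d. -/

import Mathlib

/-!
By oddness of `J_p` and symmetry it suffices to bound `J_p x - J_p y` from below by
`(p - 1) (x - y) (x² + y²)^((p-2)/2)` when `y < x`. On `[0, ∞)` we have `J_p t = t^(p-1)`, which is
concave, so its tangent line at `x` gives `J_p x - J_p y ≥ (p - 1) x^(p-2) (x - y)` for `0 ≤ y`;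
as `p - 2 < 0` and `x² ≤ x² + y²`, the factor `x^(p-2)` may be replaced by `(x² + y²)^((p-2)/2)`.
The case `x ≤ 0` follows by oddness, and when `y < 0 < x` one goes through `J_p 0 = 0`.
-/

noncomputable def J (p t : ℝ) : ℝ := |t| ^ (p - 2) * t

open Real

lemma rpow_le_rpow_add_mul_rpow_sub_one_mul_sub {q x y : ℝ} (hq₀ : 0 ≤ q) (hq₁ : q ≤ 1)
    (hx : 0 < x) (hy : 0 ≤ y) : y ^ q ≤ x ^ q + q * x ^ (q - 1) * (y - x) := by
  have bernoulli := rpow_one_add_le_one_add_mul_self (s := y / x - 1)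
    (by linarith [div_nonneg hy hx.le]) hq₀ hq₁
  rw [add_sub_cancel, div_rpow hy hx.le, div_le_iff₀ (rpow_pos_of_pos hx q)] at bernoulli
  calc y ^ q ≤ (1 + q * (y / x - 1)) * x ^ q := bernoulli
    _ = x ^ q + q * (x ^ q / x) * (y - x) := by field_simp
    _ = x ^ q + q * x ^ (q - 1) * (y - x) := by rw [rpow_sub_one hx.ne']

lemma rpow_div_two_le_rpow {r s t : ℝ} (hr : r ≤ 0) (ht : 0 < t) (hts : t ^ 2 ≤ s) :
    s ^ (r / 2) ≤ t ^ r := by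
  calc s ^ (r / 2) ≤ (t ^ 2) ^ (r / 2) := rpow_le_rpow_of_nonpos (by positivity) hts (by linarith)
    _ = t ^ r := by
      rw [← rpow_natCast, ← rpow_mul ht.le, Nat.cast_ofNat, mul_div_cancel₀ r two_ne_zero]

section J

variable {p : ℝ}

lemma J_neg (t : ℝ) : J p (-t) = -J p t := by
  simp only [J, abs_neg, mul_neg]

lemma J_zero : J p 0 = 0 := by
  simp only [J, mul_zero]

lemma J_of_nonneg (hp : 1 < p) {t : ℝ} (ht : 0 ≤ t) : J p t = t ^ (p - 1) := by
  rw [J, abs_of_nonneg ht, show p - 1 = p - 2 + 1 by ring, rpow_add_one' ht (by linarith)]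

lemma mul_sub_mul_rpow_le_J_sub_J (hp1 : 1 < p) (hp2 : p ≤ 2) {s x y : ℝ} (hx : 0 < x)
    (hy : 0 ≤ y) (hyx : y ≤ x) (hxs : x ^ 2 ≤ s) :
    (p - 1) * (x - y) * s ^ ((p - 2) / 2) ≤ J p x - J p y := by
  have tangent := rpow_le_rpow_add_mul_rpow_sub_one_mul_sub (q := p - 1) (by linarith)
    (by linarith) hx hy
  rw [show p - 1 - 1 = p - 2 by ring] at tangent
  have hs := rpow_div_two_le_rpow (r := p - 2) (by linarith) hx hxs
  rw [J_of_nonneg hp1 hx.le, J_of_nonneg hp1 hy]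
  nlinarith [mul_le_mul_of_nonneg_left hs (by nlinarith : 0 ≤ (p - 1) * (x - y))]

lemma mul_sub_mul_rpow_le_J_sub_J_of_lt (hp1 : 1 < p) (hp2 : p ≤ 2) {x y : ℝ} (hyx : y < x) :
    (p - 1) * (x - y) * (x ^ 2 + y ^ 2) ^ ((p - 2) / 2) ≤ J p x - J p y := by
  rcases le_or_gt 0 y with hy | hy
  · exact mul_sub_mul_rpow_le_J_sub_J hp1 hp2 (hy.trans_lt hyx) hy hyx.le (by nlinarith)
  rcases le_or_gt x 0 with hx | hx
  · have hneg := mul_sub_mul_rpow_le_J_sub_J hp1 hp2 (s := x ^ 2 + y ^ 2) (neg_pos.2 hy)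
      (neg_nonneg.2 hx) (by linarith) (by nlinarith)
    rw [J_neg, J_neg] at hneg
    linarith
  · have hxpart := mul_sub_mul_rpow_le_J_sub_J hp1 hp2 (s := x ^ 2 + y ^ 2) hx le_rfl
      hx.le (by nlinarith)
    have hypart := mul_sub_mul_rpow_le_J_sub_J hp1 hp2 (s := x ^ 2 + y ^ 2) (neg_pos.2 hy)
      le_rfl (by linarith) (by nlinarith)
    rw [J_neg, J_zero] at hypart
    rw [J_zero] at hxpart
    linarith

lemma mul_sq_mul_rpow_le_J_sub_J_mul (hp1 : 1 < p) (hp2 : p ≤ 2) (x y : ℝ) :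
    (p - 1) * (x - y) ^ 2 * (x ^ 2 + y ^ 2) ^ ((p - 2) / 2) ≤ (J p x - J p y) * (x - y) := by
  wlog hyx : y < x generalizing x y
  · rcases (not_lt.1 hyx).eq_or_lt with rfl | hxy
    · simp
    · have h := this y x hxy
      rwa [add_comm (y ^ 2), ← neg_sub x y, neg_sq, ← neg_sub (J p x), neg_mul_neg] at h
  calc (p - 1) * (x - y) ^ 2 * (x ^ 2 + y ^ 2) ^ ((p - 2) / 2)
      = (p - 1) * (x - y) * (x ^ 2 + y ^ 2) ^ ((p - 2) / 2) * (x - y) := by ring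
    _ ≤ (J p x - J p y) * (x - y) :=
      mul_le_mul_of_nonneg_right (mul_sub_mul_rpow_le_J_sub_J_of_lt hp1 hp2 hyx) (by linarith)

end J

theorem stmt_16 (p : ℝ) (hp1 : 1 < p) (hp2 : p < 2) (a b c d : ℝ) :
    (J p (a - b) - J p (c - d)) * ((a - c) - (b - d)) ≥
      (p - 1) * |(a - c) - (b - d)| ^ 2 *
        ((|a - b| ^ 2 + |c - d| ^ 2) ^ ((p - 2) / 2)) := by
  rw [sub_sub_sub_comm a c b d, sq_abs, sq_abs, sq_abs]
  exact mul_sq_mul_rpow_le_J_sub_J_mul hp1 hp2.le (a - b) (c - d)
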